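/- For any integer point x, the number of groups of a vertebrate family 𝒥 that contain at least one interval of length at least 2v+1 containing x is at most 2v, where the groups are the connected components of the significant-overlap graph H on 𝒥. -/
import Mathlib


/-- The open real interval corresponding to an integer pair `(a, b)`. -/
def iv (p : ℤ × ℤ) : Set ℝ := Set.Ioo (p.1 : ℝ) (p.2 : ℝ)

/-- Two integer-endpoint open intervals intersect (share a point). -/
def Meets (p q : ℤ × ℤ) : Prop := (iv p ∩ iv q).Nonempty

/-- A vertebrate family: distinct open intervals with integer endpoints contained in
`[0, m]`, containing the `m` unit intervals `(i-1, i)` for `1 ≤ i ≤ m`. -/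
def Vertebrate (m : ℤ) (J : Finset (ℤ × ℤ)) : Prop :=
  (∀ p ∈ J, 0 ≤ p.1 ∧ p.1 < p.2 ∧ p.2 ≤ m) ∧
  (∀ i : ℤ, 1 ≤ i → i ≤ m → ((i - 1, i) : ℤ × ℤ) ∈ J)

/-- `Bar v R S` (written `ℛ∣𝒮`): every interval in `R` intersects at most `v`
pairwise disjoint intervals of `S` other than itself. -/
def Bar (v : ℕ) (R S : Finset (ℤ × ℤ)) : Prop :=
  ∀ p ∈ R, ∀ T ⊆ S.erase p,
    ((T : Set (ℤ × ℤ)).Pairwise fun a b => ¬ Meets a b) →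
    (∀ q ∈ T, Meets p q) → T.card ≤ v

/-- An (ordered) 2-partition of a family `S`. -/
def TwoPartition (P Q S : Finset (ℤ × ℤ)) : Prop := P ∪ Q = S ∧ Disjoint P Q

/-- A good 2-partition: each part satisfies `𝒮∣𝒮`. -/
def GoodPartition (v : ℕ) (P Q S : Finset (ℤ × ℤ)) : Prop :=
  TwoPartition P Q S ∧ Bar v P P ∧ Bar v Q Q

/-- `Jsub S l r` = the subfamily of intervals of `S` contained in `(l, r)`. -/
def Jsub (S : Finset (ℤ × ℤ)) (l r : ℤ) : Finset (ℤ × ℤ) :=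
  S.filter fun p => l ≤ p.1 ∧ p.2 ≤ r

/-- The subfamily of intervals of length at most `v`. -/
def Jle (v : ℕ) (S : Finset (ℤ × ℤ)) : Finset (ℤ × ℤ) := S.filter fun p => p.2 - p.1 ≤ (v : ℤ)

/-- The subfamily of intervals of length greater than `v`. -/
def Jgt (v : ℕ) (S : Finset (ℤ × ℤ)) : Finset (ℤ × ℤ) := S.filter fun p => (v : ℤ) < p.2 - p.1

/-- `Ksub S s` = the subfamily of intervals `(a, b) ∈ S` with `a < s < b`. -/
def Ksub (S : Finset (ℤ × ℤ)) (s : ℤ) : Finset (ℤ × ℤ) := S.filter fun p => p.1 < s ∧ s < p.2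

/-- `alphaF S l r` = maximum size of a subfamily of pairwise disjoint intervals of `S`
each of which intersects the interval `(l, r)`. -/
noncomputable def alphaF (S : Finset (ℤ × ℤ)) (l r : ℤ) : ℕ :=
  sSup {k : ℕ | ∃ T ⊆ S, T.card = k ∧
    ((T : Set (ℤ × ℤ)).Pairwise fun a b => ¬ Meets a b) ∧ ∀ p ∈ T, Meets p (l, r)}

/-- `idx v R u s` = the maximum `i ∈ [0, s]` such that `u ≤ alphaF R i s ≤ v + 1`,
or `-1` if no such index exists. -/
noncomputable def idx (v : ℕ) (R : Finset (ℤ × ℤ)) (u : ℕ) (s : ℤ) : ℤ :=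
  sSup (insert (-1) {i : ℤ | 0 ≤ i ∧ i ≤ s ∧ u ≤ alphaF R i s ∧ alphaF R i s ≤ v + 1})

/-- An `s`-monotonic sequence `r = ⟨r_0, …, r_{v+2}⟩`. -/
def SMonotonic (v : ℕ) (s : ℤ) (r : ℕ → ℤ) : Prop :=
  r 0 = s ∧ r (v + 2) = -1 ∧ (∀ u ≤ v + 1, r (u + 1) ≤ r u) ∧
  ∀ u ≤ v + 1, (r (u + 1) = -1 ∧ r u = -1) ∨ r (u + 1) < r u

/-- An `s`-monotonic sequence `r` encodes `R ⊆ 𝒥(0,s)` if `r_u = i(R, u, s)` for all `u`. -/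
def Encodes (v : ℕ) (r : ℕ → ℤ) (R : Finset (ℤ × ℤ)) (s : ℤ) : Prop :=
  ∀ u ≤ v + 2, r u = idx v R u s

/-- `alphaSeq v r i` = the maximum `u ∈ [0, v+1]` with `i ≤ r u`. -/
noncomputable def alphaSeq (v : ℕ) (r : ℕ → ℤ) (i : ℤ) : ℕ :=
  sSup {u : ℕ | u ≤ v + 1 ∧ i ≤ r u}

/-- `(l, r)` is a vertebrate range for the 2-partition `(P, Q)` of `𝒥(0,s)`:
all backbone unit intervals contained in `(l, r)` lie in the same part. -/
def VertRange (P Q : Finset (ℤ × ℤ)) (s l r : ℤ) : Prop :=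
  0 ≤ l ∧ l < r ∧ r ≤ s ∧
  ((∀ i : ℤ, l < i → i ≤ r → ((i - 1, i) : ℤ × ℤ) ∈ P) ∨
   (∀ i : ℤ, l < i → i ≤ r → ((i - 1, i) : ℤ × ℤ) ∈ Q))

/-- A maximal vertebrate range. -/
def MaxVertRange (P Q : Finset (ℤ × ℤ)) (s l r : ℤ) : Prop :=
  VertRange P Q s l r ∧
  ∀ l' r', VertRange P Q s l' r' → l' ≤ l → r ≤ r' → l' = l ∧ r' = r

/-- A 2-partition `(P, Q)` of `𝒥(0,s)` is basic if for every maximal vertebrate range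
`(l, r)` its induced 2-partition of `𝒥(l,r)` is `(𝒥_≤(l,r), 𝒥_>(l,r))` or the swap. -/
def Basic (v : ℕ) (J P Q : Finset (ℤ × ℤ)) (s : ℤ) : Prop :=
  ∀ l r : ℤ, MaxVertRange P Q s l r →
    (P ∩ Jsub J l r = Jle v (Jsub J l r) ∧ Q ∩ Jsub J l r = Jgt v (Jsub J l r)) ∨
    (P ∩ Jsub J l r = Jgt v (Jsub J l r) ∧ Q ∩ Jsub J l r = Jle v (Jsub J l r))

/-- `(p, q)` (a pair of `s`-monotonic sequences) extends `(p', q')` (a pair of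
`s'`-monotonic sequences) by the 2-partition `(E, F)` of `𝒦_{s'} ∖ 𝒦_s`. -/
def ExtendsBy (v : ℕ) (J : Finset (ℤ × ℤ)) (s' s : ℤ) (p q p' q' : ℕ → ℤ)
    (E F : Finset (ℤ × ℤ)) : Prop :=
  let D := Jgt v (Jsub J s' s)
  let w := alphaF D s' s
  let w' := alphaF (F ∪ D) s' s
  let d := (s - s').toNat
  (∀ u : ℕ, 1 ≤ u → u ≤ min d (v + 1) → p u = s - (u : ℤ)) ∧
  (∀ u : ℕ, d < u → u ≤ v + 1 → p u = p' (u - d)) ∧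
  (∀ u : ℕ, 1 ≤ u → u ≤ min w' (v + 1) → q u = idx v (F ∪ D) u s) ∧
  (∀ u : ℕ, w' < u → u ≤ v + 1 → q u = q' (u - w))

/-- The dynamic-programming predicate `Y(s, p, q, 𝒜, ℬ)`. -/
def Ypred (v : ℕ) (J : Finset (ℤ × ℤ)) (s : ℤ) (p q : ℕ → ℤ)
    (A B : Finset (ℤ × ℤ)) : Prop :=
  ∃ P Q : Finset (ℤ × ℤ), TwoPartition P Q (Jsub J 0 s) ∧
    Bar v P P ∧ Bar v Q Q ∧ Basic v J P Q s ∧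
    Encodes v p P s ∧ Encodes v q Q s ∧
    Bar v P (P ∪ A) ∧ Bar v Q (Q ∪ B) ∧
    (0 < s → ((s - 1, s) : ℤ × ℤ) ∈ P)

/-- Two intervals overlap significantly: their intersection has length at least `2v+1`. -/
def SigOverlap (v : ℕ) (p q : ℤ × ℤ) : Prop :=
  (2 * (v : ℤ) + 1) ≤ min p.2 q.2 - max p.1 q.1

/-- The significant-overlap graph `H` on a family `J`. -/
def Hgraph (v : ℕ) (J : Finset (ℤ × ℤ)) : SimpleGraph {p : ℤ × ℤ // p ∈ J} :=
  SimpleGraph.fromRel fun p q => SigOverlap v p.1 q.1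

/-- Key classifying long intervals containing `x` into `2v` classes. -/
noncomputable def keyF (v : ℕ) (x : ℤ) (p : ℤ × ℤ) : ℤ :=
  if x - p.1 ≤ (v : ℤ) then x - p.1
  else if p.2 - x ≤ (v : ℤ) - 1 then -(p.2 - x)
  else 0

lemma keyF_mem (v : ℕ) (hv : 1 ≤ v) (x : ℤ) (p : ℤ × ℤ)
    (h1 : p.1 < x) (h2 : x < p.2) :
    keyF v x p ∈ Finset.Icc (1 - (v : ℤ)) (v : ℤ) := by
  unfold keyF
  simp only [Finset.mem_Icc]
  split_ifs <;> omega

lemma keyF_overlap (v : ℕ) (x : ℤ) (p q : ℤ × ℤ)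
    (hp : 2 * (v : ℤ) + 1 ≤ p.2 - p.1) (hq : 2 * (v : ℤ) + 1 ≤ q.2 - q.1)
    (hp1 : p.1 < x) (hp2 : x < p.2) (hq1 : q.1 < x) (hq2 : x < q.2)
    (hk : keyF v x p = keyF v x q) : SigOverlap v p q := by
  unfold keyF at hk
  unfold SigOverlap
  split_ifs at hk <;> omega

/-- For any integer point `x`, the number of groups of a vertebrate family `J`
containing at least one interval of length at least `2v + 1` that contains `x`
is at most `2v`, the groups being the connected components of the
significant-overlap graph `H` on `J`. -/

theorem point_in_few_long_groups
    (v : ℕ) (hv : 1 ≤ v) (m : ℤ) (hm : 1 ≤ m)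
    (J : Finset (ℤ × ℤ)) (hJ : Vertebrate m J) (x : ℤ) :
    Set.ncard {c : (Hgraph v J).ConnectedComponent |
        ∃ p : {p : ℤ × ℤ // p ∈ J},
          (Hgraph v J).connectedComponentMk p = c ∧
          2 * (v : ℤ) + 1 ≤ p.1.2 - p.1.1 ∧ (x : ℝ) ∈ iv p.1} ≤
      2 * v := by
  classical
  set G := Hgraph v J with hG
  set S := {c : G.ConnectedComponent |
      ∃ p : {p : ℤ × ℤ // p ∈ J},
        G.connectedComponentMk p = c ∧
        2 * (v : ℤ) + 1 ≤ p.1.2 - p.1.1 ∧ (x : ℝ) ∈ iv p.1} with hS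
  -- the membership translation
  have hiv : ∀ p : ℤ × ℤ, (x : ℝ) ∈ iv p → p.1 < x ∧ x < p.2 := by
    intro p hx
    obtain ⟨h1, h2⟩ := hx
    exact ⟨by exact_mod_cast h1, by exact_mod_cast h2⟩
  -- define the classifying map
  have fdef : ∀ c ∈ S, ∃ p : {p : ℤ × ℤ // p ∈ J},
      G.connectedComponentMk p = c ∧
      2 * (v : ℤ) + 1 ≤ p.1.2 - p.1.1 ∧ (x : ℝ) ∈ iv p.1 := fun c hc => hc
  let f : G.ConnectedComponent → ℤ := fun c =>
    if h : c ∈ S then keyF v x (h.choose).1 else 0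
  have hfmem : ∀ c ∈ S, f c ∈ (↑(Finset.Icc (1 - (v : ℤ)) (v : ℤ)) : Set ℤ) := by
    intro c hc
    simp only [f, dif_pos hc]
    obtain ⟨-, -, hx⟩ := hc.choose_spec
    obtain ⟨h1, h2⟩ := hiv _ hx
    exact_mod_cast keyF_mem v hv x _ h1 h2
  have hinj : Set.InjOn f S := by
    intro c hc c' hc' hfe
    simp only [f, dif_pos hc, dif_pos hc'] at hfe
    obtain ⟨hmk, hlong, hx⟩ := hc.choose_spec
    obtain ⟨hmk', hlong', hx'⟩ := hc'.choose_spec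
    obtain ⟨h1, h2⟩ := hiv _ hx
    obtain ⟨h1', h2'⟩ := hiv _ hx'
    have hsig := keyF_overlap v x _ _ hlong hlong' h1 h2 h1' h2' hfe
    rw [← hmk, ← hmk']
    by_cases hpq : hc.choose = hc'.choose
    · rw [hpq]
    · apply SimpleGraph.ConnectedComponent.sound
      apply SimpleGraph.Adj.reachable
      exact (SimpleGraph.fromRel_adj _ _ _).mpr ⟨hpq, Or.inl hsig⟩
  have hle := Set.ncard_le_ncard_of_injOn f hfmem hinj
    (Finset.finite_toSet _)
  rw [Set.ncard_coe_finset] at hle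
  calc S.ncard ≤ (Finset.Icc (1 - (v : ℤ)) (v : ℤ)).card := hle
    _ = 2 * v := by rw [Int.card_Icc]; omega
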